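/- arXiv:2009.00801 — 7 statements merged into one kernel-verified Lean document; each statement's English description precedes it below -/
import Mathlib

section
/- If f : R^p → R is convex with a unique minimum point y on the closed convex set T = D⁻¹(S), where D is a matrix and S a closed convex set, then for all sufficiently large ρ > 0, the penalized objective h_ρ(x) = f(x) + (ρ/2)·dist(Dx, S)² is coercive and attains its minimum value. -/
/-!
The penalized objective `h_ρ` is convex, since the distance to a convex set is convex. A convex
function that exceeds its value at `y` everywhere on the unit sphere around `y` grows at least
linearly in `‖x - y‖`, hence is coercive, and being continuous it then attains its minimum. On the
compact sphere `f - f y` is positive wherever the penalty `dist(Dz, S)²` vanishes, by uniqueness of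
the constrained minimizer `y`, so for `ρ` large enough the penalty makes `h_ρ z - h_ρ y` positive on
the whole sphere.
-/

open Filter Metric Set

theorem Convex.convexOn_infDist {E : Type*} [NormedAddCommGroup E] [NormedSpace ℝ E]
    {S : Set E} (hS : Convex ℝ S) : ConvexOn ℝ univ fun x => infDist x S := by
  refine ⟨convex_univ, fun x₁ _ x₂ _ a b ha hb hab => ?_⟩
  rcases S.eq_empty_or_nonempty with rfl | hne
  · simp
  refine le_of_forall_pos_le_add fun ε hε => ?_
  obtain ⟨s₁, hs₁, hd₁⟩ := (infDist_lt_iff hne).1 (lt_add_of_pos_right (infDist x₁ S) hε)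
  obtain ⟨s₂, hs₂, hd₂⟩ := (infDist_lt_iff hne).1 (lt_add_of_pos_right (infDist x₂ S) hε)
  have hcombo : dist (a • x₁ + b • x₂) (a • s₁ + b • s₂) ≤ a * dist x₁ s₁ + b * dist x₂ s₂ := by
    simpa only [dist_eq_norm, smul_sub, smul_eq_mul, add_sub_add_comm, sub_zero] using
      convexOn_univ_norm.2 (mem_univ (x₁ - s₁)) (mem_univ (x₂ - s₂)) ha hb hab
  calc infDist (a • x₁ + b • x₂) S
      ≤ dist (a • x₁ + b • x₂) (a • s₁ + b • s₂) := infDist_le_dist_of_mem (hS hs₁ hs₂ ha hb hab)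
    _ ≤ a * dist x₁ s₁ + b * dist x₂ s₂ := hcombo
    _ ≤ a * (infDist x₁ S + ε) + b * (infDist x₂ S + ε) := by gcongr
    _ = a * infDist x₁ S + b * infDist x₂ S + ε := by linear_combination ε * hab

theorem ConvexOn.add_div_mul_dist_le {E : Type*} [NormedAddCommGroup E] [NormedSpace ℝ E]
    {g : E → ℝ} (hg : ConvexOn ℝ univ g) {y x : E} {r m : ℝ} (hr : 0 < r)
    (hm : ∀ z ∈ sphere y r, m ≤ g z) (hx : r ≤ dist x y) :
    g y + (m - g y) / r * dist x y ≤ g x := by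
  set d := dist x y
  have hd : 0 < d := hr.trans_le hx
  set t := r / d
  have ht₀ : 0 ≤ t := by positivity
  have ht₁ : t ≤ 1 := (div_le_one hd).2 hx
  have hz : (1 - t) • y + t • x ∈ sphere y r := by
    rw [mem_sphere, dist_eq_norm, show (1 - t) • y + t • x - y = t • (x - y) by module,
      norm_smul_of_nonneg ht₀, ← dist_eq_norm, div_mul_cancel₀ r hd.ne']
  have hconv := hg.2 (mem_univ y) (mem_univ x) (sub_nonneg.2 ht₁) ht₀ (by ring)
  simp only [smul_eq_mul] at hconv
  have hgain : m - g y ≤ t * (g x - g y) := by linarith [hm _ hz]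
  rw [div_mul_eq_mul_div, ← le_sub_iff_add_le', div_le_iff₀ hr]
  calc (m - g y) * d ≤ t * (g x - g y) * d := by gcongr
    _ = (g x - g y) * r := by simp only [t]; field_simp

theorem ConvexOn.tendsto_cocompact_atTop_of_lt_on_sphere {E : Type*} [NormedAddCommGroup E]
    [NormedSpace ℝ E] [ProperSpace E] {g : E → ℝ} {y : E} {r : ℝ} (hg : ConvexOn ℝ univ g)
    (hgc : ContinuousOn g (sphere y r)) (hr : 0 < r) (hlt : ∀ z ∈ sphere y r, g y < g z) :
    Tendsto g (cocompact E) atTop := by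
  obtain ⟨m, hm, hmle⟩ := (isCompact_sphere y r).exists_forall_le' hgc hlt
  have hslope : 0 < (m - g y) / r := div_pos (sub_pos.2 hm) hr
  refine tendsto_atTop_mono' _ ?_ <| tendsto_atTop_add_const_left _ (g y) <|
    (tendsto_dist_right_cocompact_atTop y).const_mul_atTop hslope
  filter_upwards [(tendsto_dist_right_cocompact_atTop y).eventually_ge_atTop r] with x hx
  exact hg.add_div_mul_dist_le hr hmle hx

theorem IsCompact.exists_forall_pos_add_mul_pos {X : Type*} [TopologicalSpace X] {K : Set X}
    (hK : IsCompact K) {a b : X → ℝ} (ha : Continuous a) (hb : Continuous b)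
    (hb₀ : ∀ z ∈ K, 0 ≤ b z) (hab : ∀ z ∈ K, b z = 0 → 0 < a z) :
    ∃ ρ₀ > 0, ∀ ρ ≥ ρ₀, ∀ z ∈ K, 0 < a z + ρ * b z := by
  -- the penalty only has to compensate on the compact part of `K` where `a ≤ 0`, and there `b > 0`
  have hK' : IsCompact (K ∩ {z | a z ≤ 0}) := hK.inter_right (isClosed_le ha continuous_const)
  obtain ⟨β, hβ, hβle⟩ := hK'.exists_forall_le' hb.continuousOn fun z ⟨hzK, hz⟩ =>
    (hb₀ z hzK).lt_of_ne' fun h => (hab z hzK h).not_ge hz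
  obtain ⟨α, hα⟩ := hK.bddBelow_image ha.continuousOn
  refine ⟨|α| / β + 1, by positivity, fun ρ hρ z hz => ?_⟩
  have hρ₀ : 0 ≤ ρ := le_trans (by positivity) hρ
  rcases le_or_gt (a z) 0 with haz | haz
  · have hαz : α ≤ a z := hα ⟨z, hz, rfl⟩
    calc 0 < α + (|α| / β + 1) * β := by
            rw [add_mul, div_mul_cancel₀ _ hβ.ne']; linarith [neg_abs_le α]
      _ ≤ a z + ρ * b z := by gcongr; exact hβle z ⟨hz, haz⟩
  · nlinarith [hb₀ z hz]

/-- If `f` is convex with a unique minimum point `y` on the closed convex set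
`T = D⁻¹(S)`, then for all sufficiently large `ρ > 0` the penalized objective
`h_ρ(x) = f(x) + (ρ/2) dist(Dx,S)²` is coercive and attains its minimum value. -/
theorem stmt1 {p m : ℕ} (f : EuclideanSpace ℝ (Fin p) → ℝ)
    (hf : ConvexOn ℝ Set.univ f)
    (D : EuclideanSpace ℝ (Fin p) →L[ℝ] EuclideanSpace ℝ (Fin m))
    (S : Set (EuclideanSpace ℝ (Fin m))) (hS : IsClosed S) (hconv : Convex ℝ S)
    (y : EuclideanSpace ℝ (Fin p)) (hyT : D y ∈ S)
    (hymin : ∀ x, D x ∈ S → f y ≤ f x)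
    (hyuniq : ∀ x, D x ∈ S → f x = f y → x = y) :
    ∃ ρ₀ : ℝ, 0 < ρ₀ ∧ ∀ ρ ≥ ρ₀,
      Filter.Tendsto (fun x => f x + (ρ / 2) * (Metric.infDist (D x) S) ^ 2)
        (Filter.cocompact (EuclideanSpace ℝ (Fin p))) Filter.atTop ∧
      ∃ z, ∀ x, f z + (ρ / 2) * (Metric.infDist (D z) S) ^ 2 ≤
          f x + (ρ / 2) * (Metric.infDist (D x) S) ^ 2 := by
  have hfc : Continuous f := continuousOn_univ.1 (hf.continuousOn isOpen_univ)
  have hfeasible : ∀ z ∈ sphere y 1, infDist (D z) S ^ 2 / 2 = 0 → 0 < f z - f y := by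
    intro z hz hpen
    have hzT : D z ∈ S := (hS.mem_iff_infDist_zero ⟨D y, hyT⟩).2 (by simpa using hpen)
    have hzy : z ≠ y := ne_of_mem_sphere hz one_ne_zero
    exact sub_pos.2 <| (hymin z hzT).lt_of_ne fun h => hzy (hyuniq z hzT h.symm)
  obtain ⟨ρ₀, hρ₀, hpen⟩ := (isCompact_sphere y 1).exists_forall_pos_add_mul_pos
    (a := fun z => f z - f y) (b := fun z => infDist (D z) S ^ 2 / 2)
    (by fun_prop) (by fun_prop) (fun _ _ => by positivity) hfeasible
  refine ⟨ρ₀, hρ₀, fun ρ hρ => ?_⟩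
  have hconvex : ConvexOn ℝ univ fun x => f x + (ρ / 2) * infDist (D x) S ^ 2 :=
    hf.add <| (((hconv.convexOn_infDist).pow (fun _ _ => infDist_nonneg) 2).comp_linearMap
      D.toLinearMap).smul (by linarith)
  have hcont : Continuous fun x => f x + (ρ / 2) * infDist (D x) S ^ 2 := by fun_prop
  have hcoer := hconvex.tendsto_cocompact_atTop_of_lt_on_sphere hcont.continuousOn one_pos
    fun z hz => by
      have := hpen ρ hρ z hz
      rw [infDist_zero_of_mem hyT]
      linarith
  exact ⟨hcoer, hcont.exists_forall_le hcoer⟩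
end

section
/- Let A be a p×p positive semidefinite matrix and D an m×p matrix. If u^t A u > 0 for every nonzero u with Du = 0, then there exists ρ > 0 such that A + ρ D^t D is positive definite. -/
open Matrix

namespace Matrix

open scoped ComplexOrder

variable {n m 𝕜 : Type*} [Fintype n] [Fintype m] [RCLike 𝕜]

theorem PosSemidef.posDef_add_of_pos_on_ker {A B : Matrix n n 𝕜} (hA : A.PosSemidef)
    (hB : B.PosSemidef) (h : ∀ x, x ≠ 0 → B *ᵥ x = 0 → 0 < star x ⬝ᵥ A *ᵥ x) :
    (A + B).PosDef := by
  refine posDef_iff_dotProduct_mulVec.mpr ⟨(hA.add hB).isHermitian, fun x hx => ?_⟩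
  rw [add_mulVec, dotProduct_add]
  by_cases hBx : B *ᵥ x = 0
  · rw [hBx, dotProduct_zero, add_zero]
    exact h x hx hBx
  · have hBx_ne : star x ⬝ᵥ B *ᵥ x ≠ 0 := mt (hB.dotProduct_mulVec_zero_iff x).mp hBx
    exact add_pos_of_nonneg_of_pos (hA.dotProduct_mulVec_nonneg x)
      ((hB.dotProduct_mulVec_nonneg x).lt_of_ne' hBx_ne)

theorem PosSemidef.posDef_add_smul_conjTranspose_mul_self {A : Matrix n n 𝕜}
    (hA : A.PosSemidef) (D : Matrix m n 𝕜)
    (h : ∀ u, u ≠ 0 → D *ᵥ u = 0 → 0 < star u ⬝ᵥ A *ᵥ u) {ρ : ℝ} (hρ : 0 < ρ) :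
    (A + ρ • (Dᴴ * D)).PosDef := by
  refine hA.posDef_add_of_pos_on_ker ((posSemidef_conjTranspose_mul_self D).smul hρ.le)
    fun u hu hDu => h u hu ?_
  rwa [smul_mulVec, smul_eq_zero_iff_right hρ.ne', conjTranspose_mul_self_mulVec_eq_zero] at hDu

end Matrix

/-- If `A` is positive semidefinite and `uᵀAu > 0` for every nonzero `u` with
`Du = 0`, then there exists `ρ > 0` such that `A + ρ DᵀD` is positive definite. -/
theorem stmt2 {p m : ℕ} (A : Matrix (Fin p) (Fin p) ℝ) (hA : A.PosSemidef)
    (D : Matrix (Fin m) (Fin p) ℝ)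
    (h : ∀ u : Fin p → ℝ, u ≠ 0 → D.mulVec u = 0 → 0 < u ⬝ᵥ A.mulVec u) :
    ∃ ρ : ℝ, 0 < ρ ∧ (A + ρ • (Dᵀ * D)).PosDef :=
  ⟨1, one_pos, by
    simpa only [conjTranspose_eq_transpose_of_trivial] using
      hA.posDef_add_smul_conjTranspose_mul_self D (by simpa only [star_trivial] using h) one_pos⟩
end

section
/- Suppose S is closed convex and f is L-smooth and μ-strongly convex. Then h_ρ(x) = f(x) + (ρ/2)dist(Dx,S)² has a unique minimizer z_ρ, and the proximal distance MM iterates satisfy h_ρ(x_n) - h_ρ(z_ρ) ≤ [1 - μ²/(2(L + ρ‖D‖²)²)]^n · (h_ρ(x_0) - h_ρ(z_ρ)). -/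
/-!
`h_ρ` is `μ`-strongly convex: `f` is, and `dist(·, S)²` lies above its tangent at `u`, whose
slope is `2 (u - P u)` (the obtuse-angle property of the projection onto a convex set). Hence
`h_ρ` is coercive, has a minimizer, and the midpoint of two minimizers would be strictly worse.

The surrogate `g_ρ(· | x_n)` lies above `h_ρ` and, by the descent lemma for `f`, below the
quadratic `h_ρ(x_n) + ⟪∇h_ρ(x_n), w - x_n⟫ + κ/2 ‖w - x_n‖²` with `κ = L + ρ‖D‖²`. Evaluating it
at `x_n + (μ/κ)(z - x_n)` and using strong convexity towards the minimizer `z` gives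
`h_ρ(x_{n+1}) - h_ρ(z) ≤ (1 - μ/κ) (h_ρ(x_n) - h_ρ(z))`, and `1 - μ/κ ≤ 1 - μ²/(2κ²)` as
`μ ≤ L ≤ κ`.
-/

open scoped RealInnerProductSpace

open Metric Set

def IsMetricProjection {F : Type*} [NormedAddCommGroup F] (S : Set F) (P : F → F) : Prop :=
  ∀ x, P x ∈ S ∧ ∀ s ∈ S, ‖x - P x‖ ≤ ‖x - s‖

namespace IsMetricProjection

variable {F : Type*} [NormedAddCommGroup F] {S : Set F} {P : F → F}

theorem infDist_eq (hP : IsMetricProjection S P) (u : F) : infDist u S = ‖u - P u‖ := by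
  have : Nonempty S := ⟨⟨P u, (hP u).1⟩⟩
  refine le_antisymm ?_ ?_
  · simpa [dist_eq_norm] using infDist_le_dist_of_mem (hP u).1
  · rw [infDist_eq_iInf]
    exact le_ciInf fun w => by simpa [dist_eq_norm] using (hP u).2 w w.2

variable [InnerProductSpace ℝ F]

theorem inner_sub_le_zero (hP : IsMetricProjection S P) (hconv : Convex ℝ S) (u : F)
    {s : F} (hs : s ∈ S) : ⟪u - P u, s - P u⟫ ≤ 0 := by
  refine (norm_eq_iInf_iff_real_inner_le_zero hconv (hP u).1).1 ?_ s hs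
  rw [← hP.infDist_eq, infDist_eq_iInf]
  simp only [dist_eq_norm]

theorem sq_norm_add_two_inner_le_sq_infDist (hP : IsMetricProjection S P) (hconv : Convex ℝ S)
    (u v : F) : ‖u - P u‖ ^ 2 + 2 * ⟪u - P u, v - u⟫ ≤ infDist v S ^ 2 := by
  have hobtuse := hP.inner_sub_le_zero hconv u (hP v).1
  have hsplit : ⟪v - P v, u - P u⟫ =
      ⟪u - P u, v - u⟫ + ‖u - P u‖ ^ 2 - ⟪u - P u, P v - P u⟫ := by
    rw [show v - P v = (v - u) + (u - P u) - (P v - P u) by abel, inner_sub_left, inner_add_left,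
      real_inner_comm (v - u), real_inner_comm (u - P u), real_inner_self_eq_norm_sq,
      real_inner_comm (P v - P u)]
  rw [hP.infDist_eq]
  nlinarith [real_inner_le_norm (v - P v) (u - P u), sq_nonneg (‖v - P v‖ - ‖u - P u‖)]

end IsMetricProjection

section Gradient

variable {E : Type*} [NormedAddCommGroup E] [InnerProductSpace ℝ E] {f : E → ℝ} {f' : E → E}
  {L μ : ℝ}

theorem le_add_inner_add_of_lipschitz_gradient [CompleteSpace E]
    (hgrad : ∀ x, HasGradientAt f (f' x) x) (hLip : ∀ x y, ‖f' x - f' y‖ ≤ L * ‖x - y‖) (x y : E) :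
    f y ≤ f x + ⟪f' x, y - x⟫ + L / 2 * ‖y - x‖ ^ 2 := by
  set d := y - x
  let ψ : ℝ → ℝ := fun t => f x + t * ⟪f' x, d⟫ + L / 2 * t ^ 2 * ‖d‖ ^ 2 - f (x + t • d)
  have hψ (t : ℝ) : HasDerivAt ψ (⟪f' x, d⟫ + L * t * ‖d‖ ^ 2 - ⟪f' (x + t • d), d⟫) t := by
    have hline : HasDerivAt (fun t : ℝ => x + t • d) d t := by
      simpa using ((hasDerivAt_id t).smul_const d).const_add x
    have hquad : HasDerivAt (fun t : ℝ => L / 2 * t ^ 2 * ‖d‖ ^ 2) (L * t * ‖d‖ ^ 2) t :=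
      (((hasDerivAt_pow 2 t).const_mul (L / 2)).mul_const _).congr_deriv (by push_cast; ring)
    exact ((((hasDerivAt_id t).mul_const _).const_add _).add hquad).sub
      ((hgrad _).hasFDerivAt.comp_hasDerivAt t hline) |>.congr_deriv (by simp)
  have hψ_nonneg (t : ℝ) (ht : 0 ≤ t) :
      0 ≤ ⟪f' x, d⟫ + L * t * ‖d‖ ^ 2 - ⟪f' (x + t • d), d⟫ := by
    have hgap : ‖f' (x + t • d) - f' x‖ ≤ L * (t * ‖d‖) := by
      simpa [norm_smul, abs_of_nonneg ht] using hLip (x + t • d) x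
    have := real_inner_le_norm (f' (x + t • d) - f' x) d
    rw [inner_sub_left] at this
    nlinarith [norm_nonneg d]
  have hmono : MonotoneOn ψ (Ici 0) :=
    monotoneOn_of_hasDerivWithinAt_nonneg (convex_Ici 0)
      (fun t _ => (hψ t).continuousAt.continuousWithinAt) (fun t _ => (hψ t).hasDerivWithinAt)
      (fun t ht => hψ_nonneg t (interior_subset ht))
  have := hmono self_mem_Ici (mem_Ici.2 zero_le_one) zero_le_one
  simp only [ψ, d, zero_smul, one_smul, add_zero, add_sub_cancel] at this
  linarith

theorem le_of_strongly_convex_of_lipschitz_gradient [Nontrivial E]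
    (hLip : ∀ x y, ‖f' x - f' y‖ ≤ L * ‖x - y‖)
    (hsc : ∀ x y, f y ≥ f x + ⟪f' x, y - x⟫ + (μ / 2) * ‖y - x‖ ^ 2) : μ ≤ L := by
  obtain ⟨a, b, hab⟩ := exists_pair_ne E
  have hpos : 0 < ‖a - b‖ ^ 2 := by positivity [sub_ne_zero.2 hab]
  have hmono : μ * ‖a - b‖ ^ 2 ≤ ⟪f' a - f' b, a - b⟫ := by
    have h1 := hsc a b
    have h2 := hsc b a
    rw [← neg_sub a b, inner_neg_right, norm_neg] at h1
    rw [inner_sub_left]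
    linarith
  have hlip : ⟪f' a - f' b, a - b⟫ ≤ L * ‖a - b‖ ^ 2 := by
    have := real_inner_le_norm (f' a - f' b) (a - b)
    nlinarith [hLip a b, norm_nonneg (a - b)]
  nlinarith

end Gradient

section FirstOrderBounds

variable {E : Type*} [NormedAddCommGroup E] [InnerProductSpace ℝ E] {h : E → ℝ} {μ : ℝ}

theorem exists_forall_le_of_quadratic_lower_bound [ProperSpace E] (hc : Continuous h)
    (hμ : 0 < μ) (a g : E) (hb : ∀ w, h a + ⟪g, w - a⟫ + μ / 2 * ‖w - a‖ ^ 2 ≤ h w) :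
    ∃ z, ∀ w, h z ≤ h w := by
  refine hc.exists_forall_le' a (Filter.mem_cocompact.2
    ⟨closedBall a (2 * ‖g‖ / μ), isCompact_closedBall _ _, fun w hw => ?_⟩)
  show h a ≤ h w
  have hfar : 2 * ‖g‖ < μ * ‖w - a‖ := by
    rw [mem_compl_iff, mem_closedBall, dist_eq_norm, not_le, div_lt_iff₀ hμ] at hw
    linarith
  have hslope : -(‖g‖ * ‖w - a‖) ≤ ⟪g, w - a⟫ :=
    neg_le_of_abs_le (abs_real_inner_le_norm g (w - a))
  nlinarith [hb w, mul_le_mul_of_nonneg_right hfar.le (norm_nonneg (w - a))]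

theorem eq_of_forall_le_of_quadratic_lower_bound {G : E → E} (hμ : 0 < μ)
    (hb : ∀ a w, h a + ⟪G a, w - a⟫ + μ / 2 * ‖w - a‖ ^ 2 ≤ h w) {z₀ z₁ : E}
    (hz₀ : ∀ w, h z₀ ≤ h w) (hz₁ : ∀ w, h z₁ ≤ h w) : z₀ = z₁ := by
  set m := midpoint ℝ z₀ z₁
  have hm : z₁ - m = -(z₀ - m) := by simp only [m, midpoint_eq_smul_add, invOf_eq_inv]; module
  have h₀ := (hb m z₀).trans (hz₀ m)
  have h₁ := (hb m z₁).trans (hz₁ m)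
  rw [hm, inner_neg_right, norm_neg] at h₁
  have hz₀m : z₀ - m = 0 := by
    rw [← norm_eq_zero, ← sq_eq_zero_iff]
    nlinarith [sq_nonneg ‖z₀ - m‖]
  rw [hz₀m, neg_zero, sub_eq_zero] at hm
  exact (sub_eq_zero.1 hz₀m).trans hm.symm

theorem sub_le_one_sub_div_mul_sub_of_majorize {g : E → ℝ} {a z x' G : E} {κ : ℝ}
    (hμ : 0 ≤ μ) (hκ : 0 < κ) (hmin : ∀ w, h x' ≤ g w)
    (hsmooth : ∀ w, g w ≤ h a + ⟪G, w - a⟫ + κ / 2 * ‖w - a‖ ^ 2)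
    (hsc : h a + ⟪G, z - a⟫ + μ / 2 * ‖z - a‖ ^ 2 ≤ h z) :
    h x' - h z ≤ (1 - μ / κ) * (h a - h z) := by
  set t := μ / κ
  have ht : 0 ≤ t := div_nonneg hμ hκ.le
  have htκ : κ * t ^ 2 = μ * t := by rw [sq, ← mul_assoc, mul_div_cancel₀ μ hκ.ne']
  have := (hmin _).trans (hsmooth (a + t • (z - a)))
  rw [add_sub_cancel_left, inner_smul_right, norm_smul, Real.norm_of_nonneg ht, mul_pow] at this
  nlinarith [mul_le_mul_of_nonneg_left hsc ht]

end FirstOrderBounds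

section ProximalDistance

open scoped InnerProduct

variable {E F : Type*} [NormedAddCommGroup E] [InnerProductSpace ℝ E] [NormedAddCommGroup F]
  [InnerProductSpace ℝ F] {f : E → ℝ} {f' : E → E} {D : E →L[ℝ] F} {S : Set F} {P : F → F}
  {ρ L μ : ℝ}

/-- The penalized objective `h_ρ`. -/
noncomputable def proximalDistanceObjective (f : E → ℝ) (D : E →L[ℝ] F) (S : Set F) (ρ : ℝ)
    (w : E) : ℝ :=
  f w + ρ / 2 * infDist (D w) S ^ 2

/-- The MM surrogate `g_ρ(w | a)`. -/
noncomputable def proximalDistanceSurrogate (f : E → ℝ) (D : E →L[ℝ] F) (P : F → F) (ρ : ℝ)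
    (a w : E) : ℝ :=
  f w + ρ / 2 * ‖D w - P (D a)‖ ^ 2

/-- `∇h_ρ(a)`. -/
noncomputable def proximalDistanceGradient [CompleteSpace E] [CompleteSpace F] (f' : E → E)
    (D : E →L[ℝ] F) (P : F → F) (ρ : ℝ) (a : E) : E :=
  f' a + ρ • (D†) (D a - P (D a))

theorem proximalDistanceObjective_le_surrogate (hP : IsMetricProjection S P) (hρ : 0 ≤ ρ)
    (a w : E) : proximalDistanceObjective f D S ρ w ≤ proximalDistanceSurrogate f D P ρ a w := by
  have : infDist (D w) S ≤ ‖D w - P (D a)‖ := by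
    simpa [dist_eq_norm] using infDist_le_dist_of_mem (hP (D a)).1
  unfold proximalDistanceObjective proximalDistanceSurrogate
  gcongr
  exact infDist_nonneg

theorem continuous_proximalDistanceObjective [CompleteSpace E]
    (hgrad : ∀ x, HasGradientAt f (f' x) x) :
    Continuous (proximalDistanceObjective f D S ρ) :=
  (continuous_iff_continuousAt.2 fun a => (hgrad a).differentiableAt.continuousAt).add
    (continuous_const.mul (((continuous_infDist_pt S).comp D.continuous).pow 2))

variable [CompleteSpace E] [CompleteSpace F]

theorem inner_proximalDistanceGradient (a v : E) :
    ⟪proximalDistanceGradient f' D P ρ a, v⟫ = ⟪f' a, v⟫ + ρ * ⟪D a - P (D a), D v⟫ := by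
  rw [proximalDistanceGradient, inner_add_left, real_inner_smul_left,
    ContinuousLinearMap.adjoint_inner_left]

theorem proximalDistanceSurrogate_le (hP : IsMetricProjection S P) (hρ : 0 ≤ ρ)
    (hgrad : ∀ x, HasGradientAt f (f' x) x) (hLip : ∀ x y, ‖f' x - f' y‖ ≤ L * ‖x - y‖)
    (a w : E) :
    proximalDistanceSurrogate f D P ρ a w ≤ proximalDistanceObjective f D S ρ a +
      ⟪proximalDistanceGradient f' D P ρ a, w - a⟫ + (L + ρ * ‖D‖ ^ 2) / 2 * ‖w - a‖ ^ 2 := by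
  have hf := le_add_inner_add_of_lipschitz_gradient hgrad hLip a w
  have hexpand : ‖D w - P (D a)‖ ^ 2 =
      ‖D a - P (D a)‖ ^ 2 + 2 * ⟪D a - P (D a), D (w - a)⟫ + ‖D (w - a)‖ ^ 2 := by
    rw [← norm_add_sq_real, map_sub]
    congr 2
    abel
  have hD : ‖D (w - a)‖ ^ 2 ≤ ‖D‖ ^ 2 * ‖w - a‖ ^ 2 := by
    rw [← mul_pow]
    exact pow_le_pow_left₀ (norm_nonneg _) (D.le_opNorm _) 2
  rw [proximalDistanceSurrogate, proximalDistanceObjective, hP.infDist_eq, hexpand,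
    inner_proximalDistanceGradient]
  nlinarith [mul_le_mul_of_nonneg_left hD hρ]

theorem proximalDistanceObjective_strongly_convex (hP : IsMetricProjection S P)
    (hconv : Convex ℝ S) (hρ : 0 ≤ ρ)
    (hsc : ∀ x y, f y ≥ f x + ⟪f' x, y - x⟫ + (μ / 2) * ‖y - x‖ ^ 2) (a w : E) :
    proximalDistanceObjective f D S ρ a + ⟪proximalDistanceGradient f' D P ρ a, w - a⟫ +
      μ / 2 * ‖w - a‖ ^ 2 ≤ proximalDistanceObjective f D S ρ w := by
  have hdist := hP.sq_norm_add_two_inner_le_sq_infDist hconv (D a) (D w)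
  rw [proximalDistanceObjective, proximalDistanceObjective, hP.infDist_eq,
    inner_proximalDistanceGradient, map_sub]
  nlinarith [hsc a w, mul_le_mul_of_nonneg_left hdist hρ]

end ProximalDistance

theorem one_sub_div_le_one_sub_sq_div_two_mul_sq {μ κ : ℝ} (hμ : 0 < μ) (hμκ : μ ≤ κ) :
    1 - μ / κ ≤ 1 - μ ^ 2 / (2 * κ ^ 2) := by
  have hκ := hμ.trans_le hμκ
  rw [sub_le_sub_iff_left, div_le_div_iff₀ (by positivity) hκ]
  nlinarith [mul_le_mul_of_nonneg_left hμκ (mul_pos hμ hκ).le]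

theorem stmt8_general {p m : ℕ} (S : Set (EuclideanSpace ℝ (Fin m)))
    (hconv : Convex ℝ S)
    (P : EuclideanSpace ℝ (Fin m) → EuclideanSpace ℝ (Fin m))
    (hP : ∀ x, P x ∈ S ∧ ∀ s ∈ S, ‖x - P x‖ ≤ ‖x - s‖)
    (f : EuclideanSpace ℝ (Fin p) → ℝ)
    (f' : EuclideanSpace ℝ (Fin p) → EuclideanSpace ℝ (Fin p))
    (hgrad : ∀ x, HasGradientAt f (f' x) x)
    (L μ : ℝ) (hμ : 0 < μ)
    (hLip : ∀ x y, ‖f' x - f' y‖ ≤ L * ‖x - y‖)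
    (hsc : ∀ x y, f y ≥ f x + ⟪f' x, y - x⟫ + (μ / 2) * ‖y - x‖ ^ 2)
    (ρ : ℝ) (hρ : 0 < ρ)
    (D : EuclideanSpace ℝ (Fin p) →L[ℝ] EuclideanSpace ℝ (Fin m))
    (x : ℕ → EuclideanSpace ℝ (Fin p))
    (hMM : ∀ n, ∀ w, f (x (n + 1)) + (ρ / 2) * ‖D (x (n + 1)) - P (D (x n))‖ ^ 2 ≤
        f w + (ρ / 2) * ‖D w - P (D (x n))‖ ^ 2) :
    (∃! z, ∀ w, f z + (ρ / 2) * (Metric.infDist (D z) S) ^ 2 ≤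
        f w + (ρ / 2) * (Metric.infDist (D w) S) ^ 2) ∧
      ∀ z, (∀ w, f z + (ρ / 2) * (Metric.infDist (D z) S) ^ 2 ≤
          f w + (ρ / 2) * (Metric.infDist (D w) S) ^ 2) →
        ∀ n : ℕ,
          (f (x n) + (ρ / 2) * (Metric.infDist (D (x n)) S) ^ 2) -
              (f z + (ρ / 2) * (Metric.infDist (D z) S) ^ 2) ≤
            (1 - μ ^ 2 / (2 * (L + ρ * ‖D‖ ^ 2) ^ 2)) ^ n *
              ((f (x 0) + (ρ / 2) * (Metric.infDist (D (x 0)) S) ^ 2) -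
                (f z + (ρ / 2) * (Metric.infDist (D z) S) ^ 2)) := by
  set h := proximalDistanceObjective f D S ρ
  have hconvex := proximalDistanceObjective_strongly_convex (D := D) hP hconv hρ.le hsc
  obtain ⟨z₀, hz₀⟩ := exists_forall_le_of_quadratic_lower_bound
    (continuous_proximalDistanceObjective hgrad) hμ (x 0) _ (hconvex (x 0))
  refine ⟨⟨z₀, hz₀, fun z₁ hz₁ =>
    (eq_of_forall_le_of_quadratic_lower_bound hμ hconvex hz₀ hz₁).symm⟩, fun z hz n => ?_⟩
  rcases subsingleton_or_nontrivial (EuclideanSpace ℝ (Fin p)) with _ | _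
  · simp [Subsingleton.elim (x n) z, Subsingleton.elim (x 0) z]
  have hμκ : μ ≤ L + ρ * ‖D‖ ^ 2 := (le_of_strongly_convex_of_lipschitz_gradient hLip hsc).trans
    (le_add_of_nonneg_right (by positivity))
  have hκ : 0 < L + ρ * ‖D‖ ^ 2 := hμ.trans_le hμκ
  have hrate := one_sub_div_le_one_sub_sq_div_two_mul_sq hμ hμκ
  have hrate_nonneg := (sub_nonneg.2 ((div_le_one hκ).2 hμκ)).trans hrate
  refine le_geom (u := fun k => h (x k) - h z) hrate_nonneg n fun k _ => ?_
  calc h (x (k + 1)) - h z ≤ (1 - μ / (L + ρ * ‖D‖ ^ 2)) * (h (x k) - h z) :=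
        sub_le_one_sub_div_mul_sub_of_majorize hμ.le hκ
          (fun w => (proximalDistanceObjective_le_surrogate hP hρ.le (x k) _).trans (hMM k w))
          (proximalDistanceSurrogate_le hP hρ.le hgrad hLip (x k)) (hconvex (x k) z)
    _ ≤ _ := mul_le_mul_of_nonneg_right hrate (sub_nonneg.2 (hz _))

/-- For `S` closed convex and `f` `L`-smooth and `μ`-strongly convex, the
objective `h_ρ(x) = f(x) + (ρ/2)dist(Dx,S)²` has a unique minimizer `z_ρ`, and the
proximal distance MM iterates converge linearly:
`h_ρ(x_n) - h_ρ(z_ρ) ≤ [1 - μ²/(2(L + ρ‖D‖²)²)]ⁿ (h_ρ(x_0) - h_ρ(z_ρ))`. -/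
theorem stmt8 {p m : ℕ} (S : Set (EuclideanSpace ℝ (Fin m)))
    (hS : IsClosed S) (hconv : Convex ℝ S) (hne : S.Nonempty)
    (P : EuclideanSpace ℝ (Fin m) → EuclideanSpace ℝ (Fin m))
    (hP : ∀ x, P x ∈ S ∧ ∀ s ∈ S, ‖x - P x‖ ≤ ‖x - s‖)
    (f : EuclideanSpace ℝ (Fin p) → ℝ)
    (f' : EuclideanSpace ℝ (Fin p) → EuclideanSpace ℝ (Fin p))
    (hgrad : ∀ x, HasGradientAt f (f' x) x)
    (L μ : ℝ) (hL : 0 < L) (hμ : 0 < μ)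
    (hLip : ∀ x y, ‖f' x - f' y‖ ≤ L * ‖x - y‖)
    (hsc : ∀ x y, f y ≥ f x + ⟪f' x, y - x⟫ + (μ / 2) * ‖y - x‖ ^ 2)
    (ρ : ℝ) (hρ : 0 < ρ)
    (D : EuclideanSpace ℝ (Fin p) →L[ℝ] EuclideanSpace ℝ (Fin m))
    (x : ℕ → EuclideanSpace ℝ (Fin p))
    (hMM : ∀ n, ∀ w, f (x (n + 1)) + (ρ / 2) * ‖D (x (n + 1)) - P (D (x n))‖ ^ 2 ≤
        f w + (ρ / 2) * ‖D w - P (D (x n))‖ ^ 2) :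
    (∃! z, ∀ w, f z + (ρ / 2) * (Metric.infDist (D z) S) ^ 2 ≤
        f w + (ρ / 2) * (Metric.infDist (D w) S) ^ 2) ∧
      ∀ z, (∀ w, f z + (ρ / 2) * (Metric.infDist (D z) S) ^ 2 ≤
          f w + (ρ / 2) * (Metric.infDist (D w) S) ^ 2) →
        ∀ n : ℕ,
          (f (x n) + (ρ / 2) * (Metric.infDist (D (x n)) S) ^ 2) -
              (f z + (ρ / 2) * (Metric.infDist (D z) S) ^ 2) ≤
            (1 - μ ^ 2 / (2 * (L + ρ * ‖D‖ ^ 2) ^ 2)) ^ n *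
              ((f (x 0) + (ρ / 2) * (Metric.infDist (D (x 0)) S) ^ 2) -
                (f z + (ρ / 2) * (Metric.infDist (D z) S) ^ 2)) :=
  stmt8_general S hconv P hP f f' hgrad L μ hμ hLip hsc ρ hρ D x hMM
end

section
/- The k-th order statistic of n real-valued functions f_1,…,f_n satisfies the inclusion–exclusion formula f_{(k)}(x) = Σ_{j=k}^{n} Σ_{|S|=j} (-1)^{j-k} · C(j-1, k-1) · max{f_i(x) : i ∈ S}, where f_{(1)} ≤ … ≤ f_{(n)} are the sorted values. -/
/-- The `k`-th smallest value (0-indexed) among `v 0, …, v (n-1)`. -/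
noncomputable def orderStat {n : ℕ} (v : Fin n → ℝ) (k : Fin n) : ℝ :=
  ((Finset.univ.val.map v).sort (· ≤ ·))[k]'(by
    simp [Multiset.length_sort])

/-- Maximum of `g` over a finite set, defaulting to `0` on the empty set. -/
noncomputable def finsetMax {ι : Type*} (S : Finset ι) (g : ι → ℝ) : ℝ :=
  if h : S.Nonempty then S.sup' h g else 0

/-!
After relabelling the indices by a sorting permutation the values `w` are monotone, and the
right-hand side does not change. Grouping the nonempty subsets `S` by their largest index `p`,
`max_S w = w p` and `S = {p} ∪ A` with `A ⊆ {0, …, p - 1}`, so the total coefficient of `w p` is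
`∑ₘ C(p, m) (-1)^(m-k) C(m, k)`, which is `1` for `p = k` and `0` otherwise.
-/

open Finset

theorem Int.sum_range_choose_mul_choose_mul_neg_one_pow (p k : ℕ) :
    ∑ m ∈ Finset.range (p + 1), (p.choose m * m.choose k * (-1) ^ (m - k) : ℤ) =
      if p = k then 1 else 0 := by
  rcases lt_or_ge p k with hpk | hkp
  · rw [if_neg hpk.ne]
    refine sum_eq_zero fun m hm => ?_
    rw [Nat.choose_eq_zero_of_lt (n := m) (by grind)]
    simp
  · obtain ⟨d, rfl⟩ := Nat.exists_eq_add_of_le hkp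
    have hterm (i : ℕ) : ((k + d).choose (k + i) * (k + i).choose k * (-1) ^ (k + i - k) : ℤ) =
        (k + d).choose k * ((-1) ^ i * d.choose i) := by
      rw [← Nat.cast_mul, Nat.choose_mul (Nat.le_add_right k i)]
      push_cast
      simp only [Nat.add_sub_cancel_left]
      ring
    rw [show k + d + 1 = k + (d + 1) by ring, sum_range_add, sum_eq_zero fun m hm => by
      rw [Nat.choose_eq_zero_of_lt (mem_range.1 hm)]; simp]
    simp only [hterm, ← mul_sum, Int.alternating_sum_range_choose, zero_add]
    rcases d with _ | d <;> simp

theorem Finset.sum_nonempty_eq_sum_sum_powerset_Iio {α M : Type*} [LinearOrder α] [Fintype α]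
    [LocallyFiniteOrderBot α] [AddCommMonoid M] (F : Finset α → M) :
    ∑ S : Finset α with S.Nonempty, F S = ∑ p, ∑ A ∈ (Iio p).powerset, F (insert p A) := by
  rw [sum_sigma']
  refine (sum_bij' (fun x _ => insert x.1 x.2)
    (fun (S : Finset α) (hS : S ∈ univ.filter Finset.Nonempty) =>
      ⟨S.max' (mem_filter.1 hS).2, S.erase (S.max' (mem_filter.1 hS).2)⟩)
    ?_ ?_ ?_ ?_ ?_).symm
  · simp
  · intro S hS
    simp only [mem_sigma, mem_univ, mem_powerset, true_and]
    intro a ha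
    exact mem_Iio.2 (lt_of_le_of_ne (S.le_max' a (mem_of_mem_erase ha)) (ne_of_mem_erase ha))
  · rintro ⟨p, A⟩ hA
    simp only [mem_sigma, mem_univ, mem_powerset, true_and] at hA
    have hmax : (insert p A).max' (insert_nonempty p A) = p :=
      le_antisymm (max'_le _ _ _ (by simpa using fun a ha => (mem_Iio.1 (hA ha)).le))
        (le_max' _ _ (mem_insert_self p A))
    simp only [hmax, Sigma.mk.injEq, heq_eq_eq, true_and]
    exact erase_insert fun hp => (mem_Iio.1 (hA hp)).false
  · intro S hS
    exact insert_erase (max'_mem _ (mem_filter.1 hS).2)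
  · intros; rfl

/-- The coefficient of `max{v i : i ∈ S}` with `#S = j` for the `k`-th smallest value, `k`
counted from `0`. -/
def orderStatCoeff (k j : ℕ) : ℝ :=
  (-1) ^ (j - (k + 1)) * (j - 1).choose k

theorem sum_range_choose_smul_orderStatCoeff_succ (p k : ℕ) :
    ∑ m ∈ range (p + 1), p.choose m • orderStatCoeff k (m + 1) = if p = k then 1 else 0 := by
  have h := congrArg (Int.cast : ℤ → ℝ) (Int.sum_range_choose_mul_choose_mul_neg_one_pow p k)
  push_cast at h
  rw [← h]
  refine sum_congr rfl fun m _ => ?_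
  simp only [orderStatCoeff, nsmul_eq_mul, Nat.add_sub_add_right, Nat.add_sub_cancel]
  ring

theorem finsetMax_empty {ι : Type*} (g : ι → ℝ) : finsetMax ∅ g = 0 := by
  simp [finsetMax]

theorem finsetMax_map {ι κ : Type*} (e : ι ↪ κ) (S : Finset ι) (g : κ → ℝ) :
    finsetMax (S.map e) g = finsetMax S (g ∘ e) := by
  simp [finsetMax]

theorem finsetMax_insert_of_forall_le {ι : Type*} [DecidableEq ι] {g : ι → ℝ} {p : ι}
    {A : Finset ι} (h : ∀ a ∈ A, g a ≤ g p) : finsetMax (insert p A) g = g p := by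
  rw [finsetMax, dif_pos (insert_nonempty p A)]
  exact le_antisymm (sup'_le _ _ (by simpa using h)) (le_sup' g (mem_insert_self p A))

theorem orderStatCoeff_mul_finsetMax_eq_zero_of_card_le {ι : Type*} {k : ℕ} {S : Finset ι}
    (hS : #S ≤ k) (g : ι → ℝ) : orderStatCoeff k #S * finsetMax S g = 0 := by
  rcases S.eq_empty_or_nonempty with rfl | hne
  · rw [finsetMax_empty, mul_zero]
  · rw [orderStatCoeff, Nat.choose_eq_zero_of_lt (by have := hne.card_pos; omega)]
    simp

theorem sum_Icc_sum_card_eq_sum_orderStatCoeff_mul_finsetMax {α : Type*} [Fintype α] (k : ℕ)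
    (v : α → ℝ) :
    ∑ j ∈ Icc (k + 1) (Fintype.card α),
        ∑ S ∈ univ.powerset.filter (fun S : Finset α => #S = j),
          orderStatCoeff k j * finsetMax S v =
      ∑ S : Finset α, orderStatCoeff k #S * finsetMax S v := by
  calc _ = ∑ j ∈ Icc (k + 1) (Fintype.card α),
        ∑ S ∈ univ.powerset.filter (fun S : Finset α => #S = j),
          orderStatCoeff k #S * finsetMax S v :=
        sum_congr rfl fun j _ => sum_congr rfl fun S hS => by rw [(mem_filter.1 hS).2]
    _ = _ := by
      rw [sum_fiberwise_eq_sum_filter, powerset_univ]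
      refine sum_filter_of_ne fun S _ hS => mem_Icc.2 ⟨?_, card_le_univ S⟩
      by_contra! hk
      exact hS (orderStatCoeff_mul_finsetMax_eq_zero_of_card_le (Nat.le_of_lt_succ hk) v)

theorem sum_orderStatCoeff_mul_finsetMax_comp_equiv {α β : Type*} [Fintype α] [Fintype β]
    (k : ℕ) (e : α ≃ β) (v : β → ℝ) :
    ∑ S : Finset α, orderStatCoeff k #S * finsetMax S (v ∘ e) =
      ∑ S : Finset β, orderStatCoeff k #S * finsetMax S v :=
  Fintype.sum_equiv e.finsetCongr _ _ fun S => by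
    simp only [Equiv.finsetCongr_apply, card_map, finsetMax_map]
    rfl

theorem sum_orderStatCoeff_mul_finsetMax_of_monotone {n : ℕ} (k : Fin n) {w : Fin n → ℝ}
    (hw : Monotone w) : ∑ S : Finset (Fin n), orderStatCoeff k #S * finsetMax S w = w k := by
  calc ∑ S : Finset (Fin n), orderStatCoeff k #S * finsetMax S w
      = ∑ S : Finset (Fin n) with S.Nonempty, orderStatCoeff k #S * finsetMax S w :=
        (sum_filter_of_ne fun S _ h => nonempty_of_ne_empty <| by
          rintro rfl; simp [finsetMax_empty] at h).symm
    _ = ∑ p, ∑ A ∈ (Iio p).powerset, orderStatCoeff k (#A + 1) * w p := by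
        rw [sum_nonempty_eq_sum_sum_powerset_Iio]
        refine sum_congr rfl fun p _ => sum_congr rfl fun A hA => ?_
        have hA : ∀ a ∈ A, a < p := fun a ha => mem_Iio.1 (mem_powerset.1 hA ha)
        rw [card_insert_of_notMem fun hp => (hA p hp).false,
          finsetMax_insert_of_forall_le fun a ha => hw (hA a ha).le]
    _ = ∑ p, if p = k then w p else 0 := by
        refine sum_congr rfl fun p _ => ?_
        rw [← sum_mul, sum_powerset_apply_card (fun m => orderStatCoeff k (m + 1)), Fin.card_Iio,
          sum_range_choose_smul_orderStatCoeff_succ]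
        simp [Fin.val_inj]
    _ = w k := by simp

theorem orderStat_eq_apply_sort {n : ℕ} (v : Fin n → ℝ) (k : Fin n) :
    orderStat v k = v (Tuple.sort v k) := by
  have hsorted : (Finset.univ.val.map v).sort (· ≤ ·) = List.ofFn (v ∘ Tuple.sort v) := by
    refine List.Perm.eq_of_pairwise' (Multiset.pairwise_sort _ _)
      (List.sortedLE_ofFn_iff.2 (Tuple.monotone_sort v)).pairwise (Multiset.coe_eq_coe.1 ?_)
    rw [Multiset.sort_eq, ← Fin.univ_val_map, ← Multiset.map_map,
      Multiset.map_univ_val_equiv]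
  unfold orderStat
  simp only [hsorted, Fin.getElem_fin, List.getElem_ofFn]
  rfl

/-- the inclusion–exclusion formula for order statistics:
`f_{(k)}(x) = Σ_{j=k}^{n} Σ_{|S|=j} (-1)^{j-k} C(j-1,k-1) max{f_i(x) : i ∈ S}`
(here `k : Fin n` is the 0-indexed version of the 1-indexed `k` in the formula). -/
theorem stmt9 {X : Type*} {n : ℕ} (f : Fin n → X → ℝ) (k : Fin n) (x : X) :
    orderStat (fun i => f i x) k =
      ∑ j ∈ Finset.Icc (k.1 + 1) n,
        ∑ S ∈ Finset.univ.powerset.filter (fun S : Finset (Fin n) => S.card = j),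
          (-1 : ℝ) ^ (j - (k.1 + 1)) * ((j - 1).choose k.1) *
            finsetMax S (fun i => f i x) := by
  set v : Fin n → ℝ := fun i => f i x
  calc orderStat v k = v (Tuple.sort v k) := orderStat_eq_apply_sort v k
    _ = ∑ S : Finset (Fin n), orderStatCoeff k #S * finsetMax S (v ∘ Tuple.sort v) :=
      (sum_orderStatCoeff_mul_finsetMax_of_monotone k (Tuple.monotone_sort v)).symm
    _ = ∑ S : Finset (Fin n), orderStatCoeff k #S * finsetMax S v :=
      sum_orderStatCoeff_mul_finsetMax_comp_equiv k (Tuple.sort v) v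
    _ = _ := (Fintype.card_fin n ▸ sum_Icc_sum_card_eq_sum_orderStatCoeff_mul_finsetMax k.1 v).symm
end

section
/- Let T be the triangle inequality matrix of the complete graph on m vertices (m ≥ 3), encoding all 3·C(m,3) constraints of form x_{ij} - x_{ik} - x_{kj} ≤ 0 over the C(m,2) edge variables. Then the Gram matrix A = T^t T satisfies a_{ii} = 3(m-2), a_{ij} ∈ {0,-1} for i ≠ j, Σ_{j≠i}|a_{ij}| = 2(m-2), hence A is strictly diagonally dominant and T has full column rank. -/
/-! Each row of `T` is `δ_lhs - δ_rhs₁ - δ_rhs₂` for the three distinct edges of a triangle, and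
every edge is the left-hand edge of `m - 2` rows and a right-hand edge of `2(m - 2)` rows: this gives
the diagonal `3(m - 2)` of `TᵀT` and the column sums `-(m - 2)` of `T`. Two distinct edges occur
together only when they share a vertex, and then exactly in the three rows of the triangle they span,
where their coefficients multiply to `-1`, `-1` and `+1`. Since every row of `T` sums to `-1`, the
rows of `TᵀT` sum to `m - 2`; the off-diagonal entries being nonpositive, their absolute values sum
to `3(m - 2) - (m - 2) = 2(m - 2)`. Strict diagonal dominance makes `TᵀT` invertible, and
`rank (TᵀT) = rank T`. -/

open Matrix

/-- Index of edges of the complete graph on `m` vertices. -/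
abbrev EdgeIdx (m : ℕ) := {e : Fin m × Fin m // e.1 < e.2}

/-- Index of the triangle inequality constraints `x_{ij} - x_{ik} - x_{kj} ≤ 0`:
an edge `{i,j}` (with `i < j`) together with a third vertex `k ∉ {i,j}`.
There are `C(m,2)·(m-2) = 3·C(m,3)` such constraints. -/
abbrev TriIdx (m : ℕ) := {q : EdgeIdx m × Fin m // q.2 ≠ q.1.1.1 ∧ q.2 ≠ q.1.1.2}

/-- The triangle inequality matrix `T` of the complete graph on `m` vertices: the row of
the constraint `x_{ij} - x_{ik} - x_{kj} ≤ 0` has a `+1` in the column of edge `{i,j}`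
and `-1`s in the columns of edges `{i,k}` and `{k,j}`. -/
def triMatrix (m : ℕ) : Matrix (TriIdx m) (EdgeIdx m) ℝ := fun r e =>
  let i := r.1.1.1.1
  let j := r.1.1.1.2
  let k := r.1.2
  if e.1.1 = i ∧ e.1.2 = j then 1
  else if (e.1.1 = min i k ∧ e.1.2 = max i k) ∨ (e.1.1 = min k j ∧ e.1.2 = max k j) then -1
  else 0

open Finset

section GramMatrix

variable {ι κ : Type*} [Fintype ι] [Fintype κ]

theorem Matrix.rank_eq_card_of_sum_abs_lt_transpose_mul_self_diag [DecidableEq κ]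
    (T : Matrix ι κ ℝ) (h : ∀ k, ∑ k' ∈ univ.erase k, |(Tᵀ * T) k k'| < |(Tᵀ * T) k k|) :
    T.rank = Fintype.card κ := by
  have hdet : (Tᵀ * T).det ≠ 0 := det_ne_zero_of_sum_row_lt_diag h
  rw [← rank_transpose_mul_self, rank_of_isUnit _ ((isUnit_iff_isUnit_det _).2 hdet.isUnit)]

theorem Matrix.sum_transpose_mul_self_apply_of_sum_row_eq {R : Type*} [CommSemiring R] {c : R}
    (T : Matrix ι κ R) (hT : ∀ r, ∑ k, T r k = c) (k : κ) :
    ∑ k', (Tᵀ * T) k k' = c * ∑ r, T r k := by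
  simp only [mul_apply, transpose_apply]
  rw [sum_comm, mul_sum]
  exact sum_congr rfl fun r _ => by rw [← mul_sum, hT, mul_comm]

theorem Matrix.sum_erase_abs_eq_of_offDiag_nonpos {R : Type*} [AddCommGroup R] [LinearOrder R]
    [IsOrderedAddMonoid R] [DecidableEq κ] (A : Matrix κ κ R) (k : κ)
    (hA : ∀ k', k' ≠ k → A k k' ≤ 0) :
    ∑ k' ∈ univ.erase k, |A k k'| = A k k - ∑ k', A k k' := by
  rw [sum_congr rfl fun k' hk' => abs_of_nonpos (hA k' (ne_of_mem_erase hk')),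
    sum_neg_distrib, sum_erase_eq_sub (mem_univ k), neg_sub]

end GramMatrix

theorem Finset.card_compl_pair {α : Type*} [Fintype α] [DecidableEq α] {a b : α} (h : a ≠ b) :
    #({a, b}ᶜ : Finset α) = Fintype.card α - 2 := by
  rw [card_compl, card_pair h]

namespace EdgeIdx

variable {m : ℕ}

def of (a b : Fin m) (h : a ≠ b) : EdgeIdx m := ⟨(min a b, max a b), min_lt_max.2 h⟩

theorem eq_of_iff {e : EdgeIdx m} {a b : Fin m} (h : a ≠ b) :
    e = of a b h ↔ (e.1.1 = a ∧ e.1.2 = b) ∨ (e.1.1 = b ∧ e.1.2 = a) := by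
  obtain ⟨⟨x, y⟩, hxy⟩ := e
  have hxy' : x < y := hxy
  simp only [of, Subtype.ext_iff, Prod.ext_iff, min_def, max_def]
  split_ifs <;> omega

theorem of_eq_of_iff {a b c d : Fin m} (h : a ≠ b) (h' : c ≠ d) :
    of a b h = of c d h' ↔ (a = c ∧ b = d) ∨ (a = d ∧ b = c) := by
  rw [eq_of_iff]
  simp only [of, min_def, max_def]
  split_ifs <;> omega

theorem of_comm (a b : Fin m) (h : a ≠ b) : of a b h = of b a h.symm :=
  Subtype.ext (Prod.ext (min_comm a b) (max_comm a b))

theorem exists_eq_of_of_endpoint {e : EdgeIdx m} {v : Fin m} (hv : v = e.1.1 ∨ v = e.1.2) :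
    ∃ w, ∃ h : v ≠ w, e = of v w h := by
  have he : e.1.1 < e.1.2 := e.2
  rcases hv with rfl | rfl
  · exact ⟨e.1.2, he.ne, (eq_of_iff _).2 (Or.inl ⟨rfl, rfl⟩)⟩
  · exact ⟨e.1.1, he.ne', (eq_of_iff _).2 (Or.inr ⟨rfl, rfl⟩)⟩

end EdgeIdx

namespace TriIdx

variable {m : ℕ}

def of (x y k : Fin m) (hxy : x ≠ y) (hxk : x ≠ k) (hyk : y ≠ k) : TriIdx m :=
  ⟨(EdgeIdx.of x y hxy, k),
    show k ≠ min x y by rcases min_choice x y with h | h <;> rw [h]; exacts [hxk.symm, hyk.symm],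
    show k ≠ max x y by rcases max_choice x y with h | h <;> rw [h]; exacts [hxk.symm, hyk.symm]⟩

def rhs₁ (r : TriIdx m) : EdgeIdx m := EdgeIdx.of r.1.1.1.1 r.1.2 r.2.1.symm

def rhs₂ (r : TriIdx m) : EdgeIdx m := EdgeIdx.of r.1.2 r.1.1.1.2 r.2.2

variable (r : TriIdx m)

theorem lhs_ne_rhs₁ : r.1.1 ≠ r.rhs₁ := by
  have := r.1.1.2; have := r.2
  rw [Ne, rhs₁, EdgeIdx.eq_of_iff]; omega

theorem lhs_ne_rhs₂ : r.1.1 ≠ r.rhs₂ := by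
  have := r.1.1.2; have := r.2
  rw [Ne, rhs₂, EdgeIdx.eq_of_iff]; omega

theorem rhs₁_ne_rhs₂ : r.rhs₁ ≠ r.rhs₂ := by
  have := r.1.1.2; have := r.2
  rw [Ne, rhs₁, rhs₂, EdgeIdx.of_eq_of_iff]; omega

theorem eq_rhs_iff (e : EdgeIdx m) :
    (e = r.rhs₁ ∨ e = r.rhs₂) ↔
      (r.1.2 = e.1.1 ∧ (r.1.1.1.1 = e.1.2 ∨ r.1.1.1.2 = e.1.2)) ∨
        (r.1.2 = e.1.2 ∧ (r.1.1.1.1 = e.1.1 ∨ r.1.1.1.2 = e.1.1)) := by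
  have := r.1.1.2; have := r.2; have := e.2
  rw [rhs₁, rhs₂, EdgeIdx.eq_of_iff, EdgeIdx.eq_of_iff]; omega

theorem eq_of_iff {r : TriIdx m} {x y k : Fin m} (hxy : x ≠ y) (hxk : x ≠ k) (hyk : y ≠ k) :
    r = of x y k hxy hxk hyk ↔
      ((r.1.1.1.1 = x ∧ r.1.1.1.2 = y) ∨ (r.1.1.1.1 = y ∧ r.1.1.1.2 = x)) ∧ r.1.2 = k := by
  rw [Subtype.ext_iff, Prod.ext_iff, ← EdgeIdx.eq_of_iff hxy]
  rfl

end TriIdx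

section TriMatrix
variable {m : ℕ}

theorem triMatrix_apply (r : TriIdx m) (e : EdgeIdx m) :
    triMatrix m r e = (if e = r.1.1 then 1 else 0) - (if e = r.rhs₁ then 1 else 0) -
      (if e = r.rhs₂ then 1 else 0) := by
  have h₀ : (e.1.1 = r.1.1.1.1 ∧ e.1.2 = r.1.1.1.2) ↔ e = r.1.1 := by
    rw [Subtype.ext_iff, Prod.ext_iff]
  have h₁ : (e.1.1 = min r.1.1.1.1 r.1.2 ∧ e.1.2 = max r.1.1.1.1 r.1.2) ↔ e = r.rhs₁ := by
    rw [Subtype.ext_iff, Prod.ext_iff]; rfl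
  have h₂ : (e.1.1 = min r.1.2 r.1.1.1.2 ∧ e.1.2 = max r.1.2 r.1.1.1.2) ↔ e = r.rhs₂ := by
    rw [Subtype.ext_iff, Prod.ext_iff]; rfl
  simp only [triMatrix, h₀, h₁, h₂]
  have := r.lhs_ne_rhs₁; have := r.lhs_ne_rhs₂; have := r.rhs₁_ne_rhs₂
  split_ifs <;> simp_all

theorem triMatrix_apply_lhs (r : TriIdx m) : triMatrix m r r.1.1 = 1 := by
  simp [triMatrix_apply, r.lhs_ne_rhs₁, r.lhs_ne_rhs₂]

theorem triMatrix_apply_of_eq_rhs {r : TriIdx m} {e : EdgeIdx m} (h : e = r.rhs₁ ∨ e = r.rhs₂) :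
    triMatrix m r e = -1 := by
  rcases h with rfl | rfl
  · simp [triMatrix_apply, r.lhs_ne_rhs₁.symm, r.rhs₁_ne_rhs₂]
  · simp [triMatrix_apply, r.lhs_ne_rhs₂.symm, r.rhs₁_ne_rhs₂.symm]

theorem triMatrix_apply_eq_lhs_sub_rhs (r : TriIdx m) (e : EdgeIdx m) :
    triMatrix m r e = (if e = r.1.1 then 1 else 0) - (if e = r.rhs₁ ∨ e = r.rhs₂ then 1 else 0) := by
  by_cases h₀ : e = r.1.1
  · subst h₀
    simp [triMatrix_apply_lhs, r.lhs_ne_rhs₁, r.lhs_ne_rhs₂]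
  by_cases h : e = r.rhs₁ ∨ e = r.rhs₂
  · simp [triMatrix_apply_of_eq_rhs h, h, h₀]
  · obtain ⟨h₁, h₂⟩ := not_or.1 h
    simp [triMatrix_apply, h₀, h₁, h₂]

theorem triMatrix_apply_mul_self (r : TriIdx m) (e : EdgeIdx m) :
    triMatrix m r e * triMatrix m r e =
      (if e = r.1.1 then 1 else 0) + (if e = r.rhs₁ ∨ e = r.rhs₂ then 1 else 0) := by
  rw [triMatrix_apply_eq_lhs_sub_rhs]
  have := r.lhs_ne_rhs₁; have := r.lhs_ne_rhs₂
  split_ifs <;> simp_all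

theorem sum_triMatrix_row (r : TriIdx m) : ∑ e, triMatrix m r e = -1 := by
  simp [triMatrix_apply, sum_sub_distrib]

theorem endpoints_of_triMatrix_ne_zero {r : TriIdx m} {e : EdgeIdx m} (h : triMatrix m r e ≠ 0) :
    (e.1.1 = r.1.1.1.1 ∨ e.1.1 = r.1.1.1.2 ∨ e.1.1 = r.1.2) ∧
      (e.1.2 = r.1.1.1.1 ∨ e.1.2 = r.1.1.1.2 ∨ e.1.2 = r.1.2) := by
  have he : e = r.1.1 ∨ e = r.rhs₁ ∨ e = r.rhs₂ := by
    contrapose! h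
    simp [triMatrix_apply, h.1, h.2.1, h.2.2]
  rcases he with rfl | he
  · exact ⟨Or.inl rfl, Or.inr (Or.inl rfl)⟩
  · have := (r.eq_rhs_iff e).1 he
    omega

theorem endpoints_of_triMatrix_apply_of_ne_zero {r : TriIdx m} {a b : Fin m} (hab : a ≠ b)
    (h : triMatrix m r (EdgeIdx.of a b hab) ≠ 0) :
    (a = r.1.1.1.1 ∨ a = r.1.1.1.2 ∨ a = r.1.2) ∧ (b = r.1.1.1.1 ∨ b = r.1.1.1.2 ∨ b = r.1.2) := by
  have := endpoints_of_triMatrix_ne_zero h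
  have := (EdgeIdx.eq_of_iff hab).1 rfl
  omega

theorem triMatrix_triIdxOf_left {x y k : Fin m} (hxy : x ≠ y) (hxk : x ≠ k) (hyk : y ≠ k) :
    triMatrix m (TriIdx.of x y k hxy hxk hyk) (EdgeIdx.of x k hxk) = -1 := by
  refine triMatrix_apply_of_eq_rhs ((TriIdx.eq_rhs_iff _ _).2 ?_)
  simp only [TriIdx.of, EdgeIdx.of, min_def, max_def]
  split_ifs <;> omega

theorem triMatrix_triIdxOf_right {x y k : Fin m} (hxy : x ≠ y) (hxk : x ≠ k) (hyk : y ≠ k) :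
    triMatrix m (TriIdx.of x y k hxy hxk hyk) (EdgeIdx.of y k hyk) = -1 := by
  refine triMatrix_apply_of_eq_rhs ((TriIdx.eq_rhs_iff _ _).2 ?_)
  simp only [TriIdx.of, EdgeIdx.of, min_def, max_def]
  split_ifs <;> omega

end TriMatrix

section Counting
variable {m : ℕ}

theorem card_filter_eq_lhs (e : EdgeIdx m) : #{r : TriIdx m | e = r.1.1} = m - 2 := by
  have hcard : #({e.1.1, e.1.2}ᶜ : Finset (Fin m)) = m - 2 := by
    rw [card_compl_pair e.2.ne, Fintype.card_fin]
  rw [← hcard]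
  refine card_bij (fun r _ => r.1.2) ?_ ?_ ?_
  · rintro ⟨⟨f, k⟩, hk⟩ hr
    obtain rfl : e = f := (mem_filter.1 hr).2
    simpa [not_or] using hk
  · rintro ⟨⟨f, k⟩, _⟩ hr ⟨⟨f', k'⟩, _⟩ hr' (rfl : k = k')
    obtain rfl : e = f := (mem_filter.1 hr).2
    obtain rfl : e = f' := (mem_filter.1 hr').2
    rfl
  · intro k hk
    simp only [mem_compl, mem_insert, mem_singleton, not_or] at hk
    exact ⟨⟨(e, k), hk.1, hk.2⟩, by simp, rfl⟩

theorem card_filter_apex_eq_and_mem_lhs {x y : Fin m} (hxy : x ≠ y) :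
    #{r : TriIdx m | r.1.2 = x ∧ (r.1.1.1.1 = y ∨ r.1.1.1.2 = y)} = m - 2 := by
  have hcard : #({x, y}ᶜ : Finset (Fin m)) = m - 2 := by
    rw [card_compl_pair hxy, Fintype.card_fin]
  rw [← hcard]
  refine card_bij (fun r _ => if r.1.1.1.1 = y then r.1.1.1.2 else r.1.1.1.1) ?_ ?_ ?_
  · rintro ⟨⟨⟨⟨a, b⟩, hab⟩, k⟩, hka, hkb⟩ hr
    have hab : a < b := hab
    simp only [mem_filter, mem_univ, true_and] at hr
    simp only [mem_compl, mem_insert, mem_singleton]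
    dsimp only at *
    split_ifs <;> omega
  · rintro ⟨⟨⟨⟨a, b⟩, hab⟩, k⟩, hka, hkb⟩ hr ⟨⟨⟨⟨a', b'⟩, hab'⟩, k'⟩, hka', hkb'⟩ hr' hw
    have hab : a < b := hab
    have hab' : a' < b' := hab'
    simp only [mem_filter, mem_univ, true_and] at hr hr'
    simp only [Subtype.ext_iff, Prod.ext_iff]
    dsimp only at *
    split_ifs at hw <;> omega
  · intro w hw
    simp only [mem_compl, mem_insert, mem_singleton, not_or] at hw
    refine ⟨TriIdx.of y w x (Ne.symm hw.2) hxy.symm hw.1, ?_, ?_⟩ <;>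
      simp only [mem_filter, mem_univ, true_and, TriIdx.of, EdgeIdx.of, min_def, max_def] <;>
      split_ifs <;> omega

theorem card_filter_eq_rhs (e : EdgeIdx m) :
    #{r : TriIdx m | e = r.rhs₁ ∨ e = r.rhs₂} = 2 * (m - 2) := by
  have he : e.1.1 ≠ e.1.2 := e.2.ne
  simp_rw [TriIdx.eq_rhs_iff, filter_or]
  rw [card_union_of_disjoint, card_filter_apex_eq_and_mem_lhs he,
    card_filter_apex_eq_and_mem_lhs he.symm, two_mul]
  rw [disjoint_filter]
  rintro r - ⟨h₁, -⟩ ⟨h₂, -⟩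
  exact he (h₁ ▸ h₂)

end Counting

section Gram
variable {m : ℕ}

theorem sum_triMatrix_mul_self (e : EdgeIdx m) :
    ∑ r, triMatrix m r e * triMatrix m r e = 3 * (m - 2 : ℕ) := by
  simp only [triMatrix_apply_mul_self, sum_add_distrib, sum_boole, card_filter_eq_lhs,
    card_filter_eq_rhs]
  push_cast
  ring

theorem sum_triMatrix_col (e : EdgeIdx m) : ∑ r, triMatrix m r e = -(m - 2 : ℕ) := by
  simp only [triMatrix_apply_eq_lhs_sub_rhs, sum_sub_distrib, sum_boole, card_filter_eq_lhs,
    card_filter_eq_rhs]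
  push_cast
  ring

section Triangle
variable {v w w' : Fin m} (hvw : v ≠ w) (hvw' : v ≠ w')

theorem mem_triangle_of_triMatrix_mul_ne_zero (hww' : w ≠ w') {r : TriIdx m}
    (h : triMatrix m r (EdgeIdx.of v w hvw) * triMatrix m r (EdgeIdx.of v w' hvw') ≠ 0) :
    r ∈ ({.of v w w' hvw hvw' hww', .of v w' w hvw' hvw hww'.symm,
      .of w w' v hww' hvw.symm hvw'.symm} : Finset (TriIdx m)) := by
  obtain ⟨hv, hw⟩ := endpoints_of_triMatrix_apply_of_ne_zero hvw (left_ne_zero_of_mul h)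
  have hw' := (endpoints_of_triMatrix_apply_of_ne_zero hvw' (right_ne_zero_of_mul h)).2
  simp only [mem_insert, mem_singleton, TriIdx.eq_of_iff]
  obtain ⟨⟨⟨⟨a, b⟩, hab⟩, k⟩, hka, hkb⟩ := r
  dsimp only at *
  clear h
  rcases hv with rfl | rfl | rfl <;> rcases hw with rfl | rfl | rfl <;>
    rcases hw' with rfl | rfl | rfl <;> omega

theorem sum_triMatrix_mul_of_adjacent (hww' : w ≠ w') :
    ∑ r, triMatrix m r (EdgeIdx.of v w hvw) * triMatrix m r (EdgeIdx.of v w' hvw') = -1 := by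
  rw [← sum_subset (subset_univ _) fun r _ hr =>
    not_not.1 (mt (mem_triangle_of_triMatrix_mul_ne_zero hvw hvw' hww') hr)]
  have ne_of_apex_ne {r r' : TriIdx m} (h : r.1.2 ≠ r'.1.2) : r ≠ r' := fun h' => h (h' ▸ rfl)
  rw [sum_insert (by simpa using ⟨ne_of_apex_ne hww'.symm, ne_of_apex_ne hvw'.symm⟩),
    sum_insert (by simpa using ne_of_apex_ne hvw.symm), sum_singleton]
  have h₁ : triMatrix m (.of v w w' hvw hvw' hww') (.of v w hvw) = 1 := triMatrix_apply_lhs _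
  have h₂ : triMatrix m (.of v w' w hvw' hvw hww'.symm) (.of v w' hvw') = 1 :=
    triMatrix_apply_lhs _
  have h₃ := triMatrix_triIdxOf_left hvw hvw' hww'
  have h₄ := triMatrix_triIdxOf_left hvw' hvw hww'.symm
  have h₅ : triMatrix m (.of w w' v hww' hvw.symm hvw'.symm) (.of v w hvw) = -1 := by
    rw [EdgeIdx.of_comm]; exact triMatrix_triIdxOf_left hww' hvw.symm hvw'.symm
  have h₆ : triMatrix m (.of w w' v hww' hvw.symm hvw'.symm) (.of v w' hvw') = -1 := by
    rw [EdgeIdx.of_comm]; exact triMatrix_triIdxOf_right hww' hvw.symm hvw'.symm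
  rw [h₁, h₂, h₃, h₄, h₅, h₆]
  norm_num

end Triangle

theorem sum_triMatrix_mul_of_disjoint {e e' : EdgeIdx m}
    (h : Disjoint ({e.1.1, e.1.2} : Finset (Fin m)) {e'.1.1, e'.1.2}) :
    ∑ r, triMatrix m r e * triMatrix m r e' = 0 := by
  refine sum_eq_zero fun r _ => ?_
  by_contra hr
  have h₁ := endpoints_of_triMatrix_ne_zero (left_ne_zero_of_mul hr)
  have h₂ := endpoints_of_triMatrix_ne_zero (right_ne_zero_of_mul hr)
  simp only [disjoint_insert_left, disjoint_insert_right, disjoint_singleton, mem_insert,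
    mem_singleton] at h
  have := e.2; have := e'.2; have := r.1.1.2; have := r.2
  omega

theorem sum_triMatrix_mul_eq_zero_or_neg_one {e e' : EdgeIdx m} (hne : e ≠ e') :
    ∑ r, triMatrix m r e * triMatrix m r e' = 0 ∨
      ∑ r, triMatrix m r e * triMatrix m r e' = -1 := by
  by_cases h : Disjoint ({e.1.1, e.1.2} : Finset (Fin m)) {e'.1.1, e'.1.2}
  · exact Or.inl (sum_triMatrix_mul_of_disjoint h)
  obtain ⟨v, hv, hv'⟩ := not_disjoint_iff.1 h
  obtain ⟨w, hvw, rfl⟩ := EdgeIdx.exists_eq_of_of_endpoint (by simpa using hv)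
  obtain ⟨w', hvw', rfl⟩ := EdgeIdx.exists_eq_of_of_endpoint (by simpa using hv')
  have hww' : w ≠ w' := by rintro rfl; exact hne rfl
  exact Or.inr (sum_triMatrix_mul_of_adjacent hvw hvw' hww')

end Gram

/-- `A = TᵀT` satisfies `a_{ii} = 3(m-2)`, `a_{ij} ∈ {0,-1}` for `i ≠ j`,
and `Σ_{j≠i}|a_{ij}| = 2(m-2)`; hence `A` is strictly diagonally dominant and `T` has
full column rank. -/
theorem stmt15 (m : ℕ) (hm : 3 ≤ m) :
    (∀ e : EdgeIdx m, ((triMatrix m)ᵀ * triMatrix m) e e = 3 * ((m : ℝ) - 2)) ∧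
      (∀ e e' : EdgeIdx m, e ≠ e' →
        ((triMatrix m)ᵀ * triMatrix m) e e' = 0 ∨
          ((triMatrix m)ᵀ * triMatrix m) e e' = -1) ∧
      (∀ e : EdgeIdx m,
        ∑ e' ∈ Finset.univ.erase e, |((triMatrix m)ᵀ * triMatrix m) e e'| =
          2 * ((m : ℝ) - 2)) ∧
      (∀ e : EdgeIdx m,
        ∑ e' ∈ Finset.univ.erase e, |((triMatrix m)ᵀ * triMatrix m) e e'| <
          |((triMatrix m)ᵀ * triMatrix m) e e|) ∧
      (triMatrix m).rank = Fintype.card (EdgeIdx m) := by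
  set A := (triMatrix m)ᵀ * triMatrix m with hA
  have entry (e e' : EdgeIdx m) : A e e' = ∑ r, triMatrix m r e * triMatrix m r e' := by
    simp only [hA, mul_apply, transpose_apply]
  have hcast : ((m - 2 : ℕ) : ℝ) = m - 2 := by rw [Nat.cast_sub (by omega), Nat.cast_two]
  have hdiag (e : EdgeIdx m) : A e e = 3 * ((m : ℝ) - 2) := by
    rw [entry, sum_triMatrix_mul_self, hcast]
  have hoff (e e' : EdgeIdx m) (h : e ≠ e') : A e e' = 0 ∨ A e e' = -1 :=
    entry e e' ▸ sum_triMatrix_mul_eq_zero_or_neg_one h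
  have hrow (e : EdgeIdx m) : ∑ e', A e e' = m - 2 := by
    rw [hA, sum_transpose_mul_self_apply_of_sum_row_eq _ sum_triMatrix_row, sum_triMatrix_col,
      hcast]
    ring
  have habs (e : EdgeIdx m) : ∑ e' ∈ univ.erase e, |A e e'| = 2 * ((m : ℝ) - 2) := by
    have hnonpos (e' : EdgeIdx m) (h : e' ≠ e) : A e e' ≤ 0 := by
      rcases hoff e e' h.symm with h | h <;> simp [h]
    rw [sum_erase_abs_eq_of_offDiag_nonpos A e hnonpos, hdiag, hrow]
    ring
  have hdom (e : EdgeIdx m) : ∑ e' ∈ univ.erase e, |A e e'| < |A e e| := by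
    have hm' : (3 : ℝ) ≤ m := by exact_mod_cast hm
    rw [habs, hdiag, abs_of_nonneg (by linarith)]
    linarith
  exact ⟨hdiag, hoff, habs, hdom, rank_eq_card_of_sum_abs_lt_transpose_mul_self_diag _ hdom⟩
end

section
/- With M the incidence matrix of the complete graph on m vertices and T^t T = (3m-4)I - MM^t, for any ρ > 0 the matrix I + ρ(T^t T + I) is invertible with inverse a·I + abρ·MM^t + 4abcρ²·11^t, where a = [3(m-1)ρ + 1]^{-1}, b = [(2m-1)ρ + 1]^{-1}, c = [(m-1)ρ + 1]^{-1}. -/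
/-!
Write `N = MMᵀ` and `J = 11ᵀ`. From `MᵀM = (m-2)I + J` and `M1 = 2·1` one gets
`N² = (m-2)N + 4J` and `NJ = 2(m-1)J`, so `I`, `N`, `J` span a subalgebra. Since
`I + ρ(TᵀT + I) = (3(m-1)ρ + 1)I - ρN`, its inverse can be sought in the form `αI + βN + γJ`;
matching the coefficients of `I`, `N`, `J` forces `α = a`, `β = abρ`, `γ = 4abcρ²`.
The identities for `M` are read off from `SimpleGraph.incMatrix` of `K_m`, of which
`incidence m` is the transpose once edges `s(u, v)` are indexed by the pairs `u < v`.
-/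

open Matrix

/-- The edge–vertex incidence matrix of the complete graph on `m` vertices. -/
def incidence (m : ℕ) : Matrix (EdgeIdx m) (Fin m) ℝ :=
  fun e v => if v = e.1.1 ∨ v = e.1.2 then 1 else 0

section OrderedPairs

variable {α : Type*} [LinearOrder α]

def sym2OfLt (p : {p : α × α // p.1 < p.2}) : Sym2 α := s(p.1.1, p.1.2)

lemma sym2OfLt_injective : Function.Injective (sym2OfLt (α := α)) := by
  rintro ⟨⟨a, b⟩, hab⟩ ⟨⟨c, d⟩, hcd⟩ h
  rcases Sym2.eq_iff.mp h with ⟨rfl, rfl⟩ | ⟨rfl, rfl⟩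
  · rfl
  · exact absurd hab (asymm hcd)

lemma isDiag_of_notMem_range_sym2OfLt {z : Sym2 α} (hz : z ∉ Set.range (sym2OfLt (α := α))) :
    z.IsDiag := by
  induction z using Sym2.ind with
  | h a b =>
    rcases lt_trichotomy a b with hab | rfl | hba
    · exact absurd ⟨⟨(a, b), hab⟩, rfl⟩ hz
    · exact Sym2.mk_isDiag_iff.mpr rfl
    · exact absurd ⟨⟨(b, a), hba⟩, Sym2.eq_swap⟩ hz

lemma sum_sym2OfLt_eq_sum [Fintype α] {M : Type*} [AddCommMonoid M] (f : Sym2 α → M)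
    (hf : ∀ z, z.IsDiag → f z = 0) :
    ∑ p : {p : α × α // p.1 < p.2}, f (sym2OfLt p) = ∑ z, f z :=
  Fintype.sum_of_injective _ sym2OfLt_injective _ _
    (fun _ hz => hf _ (isDiag_of_notMem_range_sym2OfLt hz)) fun _ => rfl

end OrderedPairs

lemma SimpleGraph.incMatrix_of_isDiag {V R : Type*} [MulZeroOneClass R] [DecidableEq V]
    (G : SimpleGraph V) [DecidableRel G.Adj] (v : V) {z : Sym2 V} (hz : z.IsDiag) :
    G.incMatrix R v z = 0 :=
  G.incMatrix_of_notMem_incidenceSet fun h => G.not_isDiag_of_mem_edgeSet h.1 hz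

section Incidence

variable (m : ℕ)

lemma incidence_apply (e : EdgeIdx m) (v : Fin m) :
    incidence m e v = (⊤ : SimpleGraph (Fin m)).incMatrix ℝ v (sym2OfLt e) := by
  simp [incidence, sym2OfLt, SimpleGraph.incMatrix_apply', SimpleGraph.mk'_mem_incidenceSet_iff,
    e.2.ne]

lemma incidence_row_sum (e : EdgeIdx m) : ∑ v, incidence m e v = 2 := by
  simp only [incidence_apply]
  exact SimpleGraph.sum_incMatrix_apply_of_mem_edgeSet _ (by simpa [sym2OfLt] using e.2.ne)

lemma incidence_col_sum (v : Fin m) : ∑ e, incidence m e v = (m : ℝ) - 1 := by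
  simp only [incidence_apply]
  rw [sum_sym2OfLt_eq_sum _ fun _ => SimpleGraph.incMatrix_of_isDiag _ v,
    SimpleGraph.sum_incMatrix_apply, SimpleGraph.complete_graph_degree, Fintype.card_fin,
    Nat.cast_sub v.pos, Nat.cast_one]

lemma incidence_transpose_mul_self :
    (incidence m)ᵀ * incidence m = ((m : ℝ) - 2) • 1 + of fun _ _ => 1 := by
  ext v w
  have h_incMatrix : ((incidence m)ᵀ * incidence m) v w =
      ((⊤ : SimpleGraph (Fin m)).incMatrix ℝ * ((⊤ : SimpleGraph (Fin m)).incMatrix ℝ)ᵀ) v w := by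
    simp only [mul_apply, transpose_apply, incidence_apply]
    exact sum_sym2OfLt_eq_sum (fun z => (⊤ : SimpleGraph (Fin m)).incMatrix ℝ v z *
      (⊤ : SimpleGraph (Fin m)).incMatrix ℝ w z) fun z hz => by
        rw [SimpleGraph.incMatrix_of_isDiag _ v hz, zero_mul]
  rw [h_incMatrix, SimpleGraph.incMatrix_mul_transpose]
  rcases eq_or_ne v w with rfl | hvw
  · simp only [of_apply, if_pos, Matrix.add_apply, Matrix.smul_apply, one_apply_eq, smul_eq_mul,
      SimpleGraph.complete_graph_degree, Fintype.card_fin, Nat.cast_sub v.pos]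
    ring
  · simp [hvw]

lemma incidence_mul_ones {κ : Type*} :
    incidence m * (of fun _ _ => 1 : Matrix (Fin m) κ ℝ) = (2 : ℝ) • of fun _ _ => 1 := by
  ext e k
  simp [mul_apply, incidence_row_sum]

lemma ones_mul_incidence_transpose {κ : Type*} :
    (of fun _ _ => 1 : Matrix κ (Fin m) ℝ) * (incidence m)ᵀ = (2 : ℝ) • of fun _ _ => 1 := by
  ext k e
  simp [mul_apply, incidence_row_sum]

lemma incidence_transpose_mul_ones {κ : Type*} :
    (incidence m)ᵀ * (of fun _ _ => 1 : Matrix (EdgeIdx m) κ ℝ) =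
      ((m : ℝ) - 1) • of fun _ _ => 1 := by
  ext v k
  simp [mul_apply, incidence_col_sum]

lemma incidence_mul_transpose_sq :
    (incidence m * (incidence m)ᵀ) * (incidence m * (incidence m)ᵀ) =
      ((m : ℝ) - 2) • (incidence m * (incidence m)ᵀ) + (4 : ℝ) • of fun _ _ => 1 := by
  calc (incidence m * (incidence m)ᵀ) * (incidence m * (incidence m)ᵀ)
      = incidence m * ((incidence m)ᵀ * incidence m) * (incidence m)ᵀ := by
        simp only [Matrix.mul_assoc]
    _ = _ := by
        rw [incidence_transpose_mul_self, Matrix.mul_add, Matrix.add_mul, Matrix.mul_smul,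
          Matrix.smul_mul, Matrix.mul_one, incidence_mul_ones, Matrix.smul_mul,
          ones_mul_incidence_transpose, smul_smul]
        norm_num

lemma incidence_mul_transpose_mul_ones :
    (incidence m * (incidence m)ᵀ) * (of fun _ _ => 1 : Matrix (EdgeIdx m) (EdgeIdx m) ℝ) =
      (2 * ((m : ℝ) - 1)) • of fun _ _ => 1 := by
  rw [Matrix.mul_assoc, incidence_transpose_mul_ones, Matrix.mul_smul, incidence_mul_ones,
    smul_smul, mul_comm]

end Incidence

lemma mul_eq_one_of_sq_eq {A : Type*} [Ring A] [Algebra ℝ A] {N J : A} {μ ρ a b c : ℝ}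
    (hN : N * N = (μ - 2) • N + (4 : ℝ) • J) (hNJ : N * J = (2 * (μ - 1)) • J)
    (ha : (3 * (μ - 1) * ρ + 1) * a = 1) (hb : ((2 * μ - 1) * ρ + 1) * b = 1)
    (hc : ((μ - 1) * ρ + 1) * c = 1) :
    ((3 * (μ - 1) * ρ + 1) • 1 - ρ • N) *
      (a • 1 + (a * b * ρ) • N + (4 * a * b * c * ρ ^ 2) • J) = 1 := by
  simp only [sub_mul, mul_add, smul_mul_smul_comm, one_mul, mul_one, hN, hNJ, smul_add, smul_smul]
  match_scalars
  · linear_combination ha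
  · linear_combination (a * ρ) * hb
  · linear_combination (4 * a * b * ρ ^ 2) * hc

theorem stmt16_general (m : ℕ) (hm : 3 ≤ m) {ι : Type*} [Fintype ι]
    (T : Matrix ι (EdgeIdx m) ℝ)
    (hT : Tᵀ * T =
        (3 * (m : ℝ) - 4) • (1 : Matrix (EdgeIdx m) (EdgeIdx m) ℝ) -
          incidence m * (incidence m)ᵀ)
    (ρ : ℝ) (hρ : 0 < ρ)
    (a b c : ℝ)
    (ha : a = (3 * ((m : ℝ) - 1) * ρ + 1)⁻¹)
    (hb : b = ((2 * (m : ℝ) - 1) * ρ + 1)⁻¹)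
    (hc : c = (((m : ℝ) - 1) * ρ + 1)⁻¹) :
    IsUnit ((1 : Matrix (EdgeIdx m) (EdgeIdx m) ℝ) + ρ • (Tᵀ * T + 1)) ∧
      ((1 : Matrix (EdgeIdx m) (EdgeIdx m) ℝ) + ρ • (Tᵀ * T + 1))⁻¹ =
        a • (1 : Matrix (EdgeIdx m) (EdgeIdx m) ℝ) +
          (a * b * ρ) • (incidence m * (incidence m)ᵀ) +
          (4 * a * b * c * ρ ^ 2) • Matrix.of (fun _ _ => (1 : ℝ)) := by
  have hm1 : (1 : ℝ) ≤ m := by exact_mod_cast (by omega : 1 ≤ m)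
  have mul_inv_of_nonneg (x : ℝ) (hx : 0 ≤ x) : (x * ρ + 1) * (x * ρ + 1)⁻¹ = 1 :=
    mul_inv_cancel₀ (by positivity)
  have hA : (1 : Matrix (EdgeIdx m) (EdgeIdx m) ℝ) + ρ • (Tᵀ * T + 1) =
      (3 * ((m : ℝ) - 1) * ρ + 1) • 1 - ρ • (incidence m * (incidence m)ᵀ) := by
    rw [hT]
    module
  have hinv := mul_eq_one_of_sq_eq (incidence_mul_transpose_sq m)
    (incidence_mul_transpose_mul_ones m)
    (ha ▸ mul_inv_of_nonneg _ (by linarith)) (hb ▸ mul_inv_of_nonneg _ (by linarith))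
    (hc ▸ mul_inv_of_nonneg _ (by linarith))
  rw [hA]
  exact ⟨(isUnit_iff_isUnit_det _).mpr (isUnit_det_of_right_inverse hinv), inv_eq_right_inv hinv⟩

/-- with `M` the incidence matrix of `K_m` and `TᵀT = (3m-4)I - MMᵀ`, for
any `ρ > 0` the matrix `I + ρ(TᵀT + I)` is invertible with inverse
`a·I + abρ·MMᵀ + 4abcρ²·11ᵀ`, where `a = (3(m-1)ρ+1)⁻¹`, `b = ((2m-1)ρ+1)⁻¹`,
`c = ((m-1)ρ+1)⁻¹`. -/
theorem stmt16 (m : ℕ) (hm : 3 ≤ m) {ι : Type*} [Fintype ι] [DecidableEq ι]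
    (T : Matrix ι (EdgeIdx m) ℝ)
    (hT : Tᵀ * T =
        (3 * (m : ℝ) - 4) • (1 : Matrix (EdgeIdx m) (EdgeIdx m) ℝ) -
          incidence m * (incidence m)ᵀ)
    (ρ : ℝ) (hρ : 0 < ρ)
    (a b c : ℝ)
    (ha : a = (3 * ((m : ℝ) - 1) * ρ + 1)⁻¹)
    (hb : b = ((2 * (m : ℝ) - 1) * ρ + 1)⁻¹)
    (hc : c = (((m : ℝ) - 1) * ρ + 1)⁻¹) :
    IsUnit ((1 : Matrix (EdgeIdx m) (EdgeIdx m) ℝ) + ρ • (Tᵀ * T + 1)) ∧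
      ((1 : Matrix (EdgeIdx m) (EdgeIdx m) ℝ) + ρ • (Tᵀ * T + 1))⁻¹ =
        a • (1 : Matrix (EdgeIdx m) (EdgeIdx m) ℝ) +
          (a * b * ρ) • (incidence m * (incidence m)ᵀ) +
          (4 * a * b * c * ρ ^ 2) • Matrix.of (fun _ _ => (1 : ℝ)) :=
  stmt16_general m hm T hT ρ hρ a b c ha hb hc
end

section
/- Let h_ρ(x) = f(x) + (ρ/2)·dist(Dx, S)² with f differentiable and S closed (possibly nonconvex). If x is a local minimum of h_ρ, then 0 = ∇f(x) + ρ D^t(Dx - z) for every z in the set of nearest points S(x) = argmin_{s∈S} ‖Dx - s‖. -/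
/-! Fix a nearest point `z ∈ S` of `D x`. The smooth surrogate `g w = f w + (ρ/2)‖D w - z‖²`
majorizes `h_ρ` (since `dist(D w, S) ≤ ‖D w - z‖`) and agrees with it at `x`, so `x` is also a
local minimum of `g`. Hence `∇g(x) = ∇f(x) + ρ Dᵗ(D x - z)` vanishes. -/

open InnerProductSpace Metric

theorem Metric.infDist_eq_dist_of_forall_dist_le {α : Type*} [PseudoMetricSpace α] {x z : α}
    {s : Set α} (hz : z ∈ s) (hmin : ∀ y ∈ s, dist x z ≤ dist x y) :
    infDist x s = dist x z :=
  le_antisymm (infDist_le_dist_of_mem hz) ((le_infDist ⟨z, hz⟩).2 hmin)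

theorem IsLocalMin.of_le_of_eq {α β : Type*} [TopologicalSpace α] [Preorder β] {f g : α → β}
    {a : α} (hf : IsLocalMin f a) (hle : ∀ x, f x ≤ g x) (heq : f a = g a) : IsLocalMin g a := by
  filter_upwards [hf] with x hx
  exact heq ▸ hx.trans (hle x)

theorem HasGradientAt.add {𝕜 F : Type*} [RCLike 𝕜] [NormedAddCommGroup F] [InnerProductSpace 𝕜 F]
    [CompleteSpace F] {f g : F → 𝕜} {f' g' x : F} (hf : HasGradientAt f f' x)
    (hg : HasGradientAt g g' x) : HasGradientAt (fun w => f w + g w) (f' + g') x := by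
  rw [hasGradientAt_iff_hasFDerivAt, map_add]
  exact hf.hasFDerivAt.add hg.hasFDerivAt

section Real

variable {E F : Type*} [NormedAddCommGroup E] [InnerProductSpace ℝ E] [CompleteSpace E]
  [NormedAddCommGroup F] [InnerProductSpace ℝ F] [CompleteSpace F]

theorem HasGradientAt.const_mul {f : E → ℝ} {f' x : E} (c : ℝ) (hf : HasGradientAt f f' x) :
    HasGradientAt (fun w => c * f w) (c • f') x := by
  rw [hasGradientAt_iff_hasFDerivAt, map_smul]
  exact hf.hasFDerivAt.const_mul c

theorem IsLocalMin.hasGradientAt_eq_zero {f : E → ℝ} {f' x : E} (h : IsLocalMin f x)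
    (hf : HasGradientAt f f' x) : f' = 0 :=
  (toDual ℝ E).map_eq_zero_iff.1 (h.hasFDerivAt_eq_zero hf.hasFDerivAt)

theorem hasGradientAt_norm_sq_sub_const (A : E →L[ℝ] F) (b : F) (x : E) :
    HasGradientAt (fun w => ‖A w - b‖ ^ 2) ((2 : ℝ) • ContinuousLinearMap.adjoint A (A x - b)) x := by
  rw [hasGradientAt_iff_hasFDerivAt]
  refine (A.hasFDerivAt.sub_const b).norm_sq.congr_fderiv ?_
  ext v
  simp [ContinuousLinearMap.adjoint_inner_left]

end Real

theorem stmt19_general {p m : ℕ} (f : EuclideanSpace ℝ (Fin p) → ℝ)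
    (f' : EuclideanSpace ℝ (Fin p) → EuclideanSpace ℝ (Fin p))
    (hgrad : ∀ x, HasGradientAt f (f' x) x)
    (D : EuclideanSpace ℝ (Fin p) →L[ℝ] EuclideanSpace ℝ (Fin m))
    (S : Set (EuclideanSpace ℝ (Fin m)))
    (ρ : ℝ) (hρ : 0 < ρ)
    (x : EuclideanSpace ℝ (Fin p))
    (hx : IsLocalMin (fun w => f w + (ρ / 2) * (Metric.infDist (D w) S) ^ 2) x) :
    ∀ z ∈ S, (∀ s ∈ S, ‖D x - z‖ ≤ ‖D x - s‖) →
      (0 : EuclideanSpace ℝ (Fin p)) =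
        f' x + ρ • (ContinuousLinearMap.adjoint D) (D x - z) := by
  intro z hz hnearest
  have hdist : infDist (D x) S = ‖D x - z‖ := by
    simpa only [dist_eq_norm] using infDist_eq_dist_of_forall_dist_le hz (by simpa only [dist_eq_norm])
  have hsurrogate : IsLocalMin (fun w => f w + (ρ / 2) * ‖D w - z‖ ^ 2) x := by
    refine hx.of_le_of_eq (fun w => ?_) (by rw [hdist])
    have : infDist (D w) S ≤ ‖D w - z‖ := dist_eq_norm (D w) z ▸ infDist_le_dist_of_mem hz
    gcongr
    exact infDist_nonneg
  have hzero := hsurrogate.hasGradientAt_eq_zero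
    ((hgrad x).add ((hasGradientAt_norm_sq_sub_const D z x).const_mul (ρ / 2)))
  rw [smul_smul, div_mul_cancel₀ ρ two_ne_zero] at hzero
  exact hzero.symm

/-- if `x` is a local minimum of
`h_ρ(x) = f(x) + (ρ/2)·dist(Dx,S)²` with `f` differentiable and `S` closed (possibly
nonconvex), then `0 = ∇f(x) + ρ·Dᵗ(Dx - z)` for every nearest point `z` of `Dx` in `S`. -/
theorem stmt19 {p m : ℕ} (f : EuclideanSpace ℝ (Fin p) → ℝ)
    (f' : EuclideanSpace ℝ (Fin p) → EuclideanSpace ℝ (Fin p))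
    (hgrad : ∀ x, HasGradientAt f (f' x) x)
    (D : EuclideanSpace ℝ (Fin p) →L[ℝ] EuclideanSpace ℝ (Fin m))
    (S : Set (EuclideanSpace ℝ (Fin m))) (hS : IsClosed S) (hne : S.Nonempty)
    (ρ : ℝ) (hρ : 0 < ρ)
    (x : EuclideanSpace ℝ (Fin p))
    (hx : IsLocalMin (fun w => f w + (ρ / 2) * (Metric.infDist (D w) S) ^ 2) x) :
    ∀ z ∈ S, (∀ s ∈ S, ‖D x - z‖ ≤ ‖D x - s‖) →
      (0 : EuclideanSpace ℝ (Fin p)) =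
        f' x + ρ • (ContinuousLinearMap.adjoint D) (D x - z) :=
  stmt19_general f f' hgrad D S ρ hρ x hx
end
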